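/- For every T > 0 and γ > 0, the generalized Gamma density u_T is a probability density on (0,∞), i.e. ∫₀^{∞} u_T(x) dx = 1, and it solves the stationary Fokker–Planck equation −d/dx[γ(T − x³) u_T(x)] + (γT/4) d²/dx²[x u_T(x)] = 0 for every x > 0. -/

import Mathlib

open Real

/-- The generalized Gamma density
`u_T(x) = (4·4^{1/3}/(3^{1/3} Γ(4/3) T^{4/3})) x³ e^{−4x³/(3T)}` on `(0,∞)`. -/
noncomputable def uGamma (T : ℝ) (x : ℝ) : ℝ :=
  4 * (4:ℝ) ^ ((1:ℝ) / 3) / ((3:ℝ) ^ ((1:ℝ) / 3) * Real.Gamma (4 / 3) * T ^ ((4:ℝ) / 3))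
    * x ^ 3 * Real.exp (-4 * x ^ 3 / (3 * T))

lemma uGamma_hasDerivAt (T : ℝ) (hT : 0 < T) (y : ℝ) :
    HasDerivAt (uGamma T)
      (4 * (4:ℝ) ^ ((1:ℝ) / 3) / ((3:ℝ) ^ ((1:ℝ) / 3) * Real.Gamma (4 / 3) * T ^ ((4:ℝ) / 3))
        * (3 * y ^ 2 - 4 * y ^ 5 / T) * Real.exp (-4 * y ^ 3 / (3 * T))) y := by
  set C : ℝ := 4 * (4:ℝ) ^ ((1:ℝ) / 3) / ((3:ℝ) ^ ((1:ℝ) / 3) * Real.Gamma (4 / 3) * T ^ ((4:ℝ) / 3))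
  have hg : HasDerivAt (fun y : ℝ => -4 * y ^ 3 / (3 * T)) (-4 * y ^ 2 / T) y := by
    have h1 : HasDerivAt (fun y : ℝ => y ^ 3) (3 * y ^ 2) y := by
      simpa using hasDerivAt_pow 3 y
    have := (h1.const_mul (-4)).div_const (3 * T)
    refine this.congr_deriv ?_
    field_simp [hT.ne']
  have he : HasDerivAt (fun y : ℝ => Real.exp (-4 * y ^ 3 / (3 * T)))
      (Real.exp (-4 * y ^ 3 / (3 * T)) * (-4 * y ^ 2 / T)) y := hg.exp
  have hp : HasDerivAt (fun y : ℝ => C * y ^ 3) (C * (3 * y ^ 2)) y := by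
    simpa using (hasDerivAt_pow 3 y).const_mul C
  have := hp.fun_mul he
  have huG : uGamma T = fun y : ℝ => C * y ^ 3 * Real.exp (-4 * y ^ 3 / (3 * T)) := rfl
  rw [huG]
  refine this.congr_deriv ?_
  have hT' : T ≠ 0 := ne_of_gt hT
  field_simp
  ring

lemma xuGamma_hasDerivAt (T : ℝ) (hT : 0 < T) (y : ℝ) :
    HasDerivAt (fun z : ℝ => z * uGamma T z) (4 / T * (T - y ^ 3) * uGamma T y) y := by
  have := (hasDerivAt_id y).fun_mul (uGamma_hasDerivAt T hT y)
  refine this.congr_deriv ?_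
  have hT' : T ≠ 0 := ne_of_gt hT
  simp only [uGamma, id_eq, one_mul]
  field_simp
  ring

/-- Lemma 5.5: `u_T` is a probability density on `(0,∞)` and solves the
stationary Fokker–Planck equation
`−d/dx[γ(T − x³)u_T] + (γT/4) d²/dx²[x u_T] = 0` for every `x > 0`. -/
theorem generalized_gamma_stationary (T γ : ℝ) (hT : 0 < T) (hγ : 0 < γ) :
    (∫ x in Set.Ioi (0:ℝ), uGamma T x) = 1 ∧
    ∀ x : ℝ, 0 < x →
      -deriv (fun y => γ * (T - y ^ 3) * uGamma T y) x
        + γ * T / 4 * deriv (deriv (fun y => y * uGamma T y)) x = 0 := by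
  have hT' : T ≠ 0 := ne_of_gt hT
  have hG : Real.Gamma (4 / 3) ≠ 0 := by
    have := Real.Gamma_pos_of_pos (by norm_num : (0:ℝ) < 4 / 3)
    exact ne_of_gt this
  constructor
  · -- integral equals 1
    have hb : (0:ℝ) < 4 / (3 * T) := by positivity
    have key : ∫ x in Set.Ioi (0:ℝ), x ^ ((3:ℝ)) * Real.exp (-(4 / (3 * T)) * x ^ (3:ℝ))
        = (4 / (3 * T)) ^ (-((3:ℝ) + 1) / 3) * (1 / 3) * Real.Gamma (((3:ℝ) + 1) / 3) :=
      integral_rpow_mul_exp_neg_mul_rpow (by norm_num) (by norm_num) hb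
    set C : ℝ := 4 * (4:ℝ) ^ ((1:ℝ) / 3) / ((3:ℝ) ^ ((1:ℝ) / 3) * Real.Gamma (4 / 3) * T ^ ((4:ℝ) / 3))
    have hcongr : ∫ x in Set.Ioi (0:ℝ), uGamma T x
        = ∫ x in Set.Ioi (0:ℝ), C * (x ^ ((3:ℝ)) * Real.exp (-(4 / (3 * T)) * x ^ (3:ℝ))) := by
      refine MeasureTheory.setIntegral_congr_fun measurableSet_Ioi (fun x hx => ?_)
      have hx0 : (0:ℝ) < x := hx
      rw [uGamma, show (x:ℝ) ^ (3:ℝ) = x ^ (3:ℕ) by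
        rw [← Real.rpow_natCast x 3]; norm_num]
      rw [mul_assoc]
      congr 2
      field_simp
    have h1 : (4 / (3 * T)) ^ (-((3:ℝ) + 1) / 3)
        = (4:ℝ) ^ (-(4:ℝ) / 3) * ((3:ℝ) ^ ((4:ℝ) / 3) * T ^ ((4:ℝ) / 3)) := by
      rw [Real.div_rpow (by norm_num) (by positivity), Real.mul_rpow (by norm_num) hT.le]
      rw [show (-((3:ℝ) + 1) / 3) = -((4:ℝ)/3) by norm_num,
        Real.rpow_neg (by norm_num : (0:ℝ) ≤ 3), Real.rpow_neg hT.le]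
      rw [Real.rpow_neg (by norm_num : (0:ℝ) ≤ 4)]
      have h44 : (4:ℝ) ^ (-(4:ℝ)/3) * (4:ℝ) ^ ((4:ℝ)/3) = 1 := by
        rw [← Real.rpow_add (by norm_num : (0:ℝ) < 4)]; norm_num
      field_simp
      have h44' : (4:ℝ) ^ (-((4:ℝ)/3)) * (4:ℝ) ^ ((4:ℝ)/3) = 1 := by
        rw [← Real.rpow_add (by norm_num : (0:ℝ) < 4)]; norm_num
      linear_combination (-1 : ℝ) * h44'
    rw [hcongr, MeasureTheory.integral_const_mul, key, h1]
    have hg43 : Real.Gamma (((3:ℝ)+1)/3) = Real.Gamma (4/3) := by norm_num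
    rw [hg43]
    have e3 : (3:ℝ) ^ ((4:ℝ)/3) = (3:ℝ) ^ ((1:ℝ)/3) * 3 := by
      rw [show (4:ℝ)/3 = 1/3 + 1 by norm_num, Real.rpow_add (by norm_num), Real.rpow_one]
    have e4 : (4:ℝ) ^ (-(4:ℝ)/3) = ((4:ℝ) ^ ((1:ℝ)/3))⁻¹ / 4 := by
      rw [show -(4:ℝ)/3 = -(1/3) + -1 by norm_num, Real.rpow_add (by norm_num),
        Real.rpow_neg_one, Real.rpow_neg (by norm_num : (0:ℝ) ≤ 4)]
      ring
    rw [e3, e4]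
    have hTp : (0:ℝ) < T ^ ((4:ℝ)/3) := Real.rpow_pos_of_pos hT _
    have h3p : (0:ℝ) < (3:ℝ) ^ ((1:ℝ)/3) := Real.rpow_pos_of_pos (by norm_num) _
    have h4p : (0:ℝ) < (4:ℝ) ^ ((1:ℝ)/3) := Real.rpow_pos_of_pos (by norm_num) _
    have iB : (3:ℝ) ^ ((1:ℝ)/3) * ((3:ℝ) ^ ((1:ℝ)/3))⁻¹ = 1 := mul_inv_cancel₀ (ne_of_gt h3p)
    have iG : Real.Gamma (4/3) * (Real.Gamma (4/3))⁻¹ = 1 := mul_inv_cancel₀ hG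
    have iT : T ^ ((4:ℝ)/3) * (T ^ ((4:ℝ)/3))⁻¹ = 1 := mul_inv_cancel₀ (ne_of_gt hTp)
    field_simp
    linear_combination (4 * (4:ℝ) ^ ((1:ℝ)/3) * (Real.Gamma (4/3) * (Real.Gamma (4/3))⁻¹)
        * (T ^ ((4:ℝ)/3) * (T ^ ((4:ℝ)/3))⁻¹)) * iB
      + (4 * (4:ℝ) ^ ((1:ℝ)/3) * (T ^ ((4:ℝ)/3) * (T ^ ((4:ℝ)/3))⁻¹)) * iG
      + (4 * (4:ℝ) ^ ((1:ℝ)/3)) * iT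
  · -- Fokker–Planck
    intro x hx
    have hderiv1 : deriv (fun y : ℝ => y * uGamma T y)
        = fun y => 4 / T * (T - y ^ 3) * uGamma T y := by
      funext y
      exact (xuGamma_hasDerivAt T hT y).deriv
    rw [hderiv1]
    have heq : (fun y : ℝ => γ * (T - y ^ 3) * uGamma T y)
        = fun y => γ * T / 4 * (4 / T * (T - y ^ 3) * uGamma T y) := by
      funext y
      field_simp
    rw [heq]
    have hdiff : DifferentiableAt ℝ (fun y : ℝ => 4 / T * (T - y ^ 3) * uGamma T y) x := by
      have hu : DifferentiableAt ℝ (uGamma T) x := (uGamma_hasDerivAt T hT x).differentiableAt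
      fun_prop
    rw [deriv_const_mul _ hdiff]
    ring
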